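/- arXiv:1104.0726 — 2 statements merged into one kernel-verified Lean document; each statement's English description precedes it below -/
import Mathlib

section
/- Let n ≥ 1, k ≥ 1 and let a2 ≥ a1 ≥ 1 be integers. Then there exists a constant C > 0 (depending on n, k, a1, a2) such that for all sufficiently large positive integers m, the kernel of the linear map D^k : V_{m·a1−k, m·a2+k−(n+1)} → V_{m·a1, m·a2−(n+1)} has ℂ-dimension at most C·m^{2n−2}. -/
/-!
With `E = ∑ yᵢ ∂/∂xᵢ`, the operators `D` and `E` satisfy the `sl₂` relation `DE - ED = a - b`
on `V_{a,b}`. The usual consequence `E^k D^k = ∏_{i<k} (DE + (i+1)(b-a-i))` on `V_{a,b}`, together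
with the injectivity of `DE + s` (`s ≥ 1`) on `V_{a,b}` for `a ≤ b`, shows that `D^k` is injective
on `V_{a,b}` when `a + k ≤ b`. Swapping the two groups of variables exchanges `D` and `E`, which
turns this into the surjectivity of `D^k : V_{a-k,b+k} → V_{a,b}` when `b + k ≤ a`.

If `a2 > a1`, the source of `D^k` lies in the injective range for large `m`. If `a2 = a1`, it lies
in the surjective range, so the kernel has dimension `dim V_{A,B} - dim V_{A+k,B-k}`, a difference
of products of binomial coefficients that is `O(m^{2n-2})` because `A` and `B` differ by a bounded
amount.
-/

open MvPolynomial

/-- The space of bihomogeneous polynomials of bidegree `(a, b)` in the two groups of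
variables `x_0, …, x_n` (indexed by `Sum.inl`) and `y_0, …, y_n` (indexed by `Sum.inr`). -/
noncomputable def Vab (n a b : ℕ) :
    Submodule ℂ (MvPolynomial (Fin (n + 1) ⊕ Fin (n + 1)) ℂ) :=
  weightedHomogeneousSubmodule ℂ
    (Sum.elim (fun _ => ((1 : ℕ), (0 : ℕ))) (fun _ => ((0 : ℕ), (1 : ℕ)))) (a, b)

/-- The operator `D = ∑ i, x_i · ∂/∂y_i`. -/
noncomputable def Dop (n : ℕ) :
    Module.End ℂ (MvPolynomial (Fin (n + 1) ⊕ Fin (n + 1)) ℂ) :=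
  ∑ i : Fin (n + 1),
    (LinearMap.mulLeft ℂ (X (Sum.inl i))).comp (pderiv (Sum.inr i)).toLinearMap

local notation "𝒫" n:max => MvPolynomial (Fin (n + 1) ⊕ Fin (n + 1)) ℂ

theorem MvPolynomial.IsWeightedHomogeneous.comp_addMonoidHom {R σ M N : Type*}
    [CommSemiring R] [AddCommMonoid M] [AddCommMonoid N] {w : σ → M} {φ : MvPolynomial σ R}
    {m : M} (h : φ.IsWeightedHomogeneous w m) (f : M →+ N) :
    φ.IsWeightedHomogeneous (f ∘ w) (f m) := by
  intro d hd
  rw [← h hd, Finsupp.weight_apply, Finsupp.weight_apply, Finsupp.sum, Finsupp.sum, map_sum]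
  simp

theorem MvPolynomial.pderiv_pderiv_comm {R σ : Type*} [CommSemiring R] (i j : σ)
    (p : MvPolynomial σ R) : pderiv i (pderiv j p) = pderiv j (pderiv i p) := by
  classical
  ext m
  simp only [coeff_pderiv, Finsupp.add_apply, Finsupp.single_apply]
  rcases eq_or_ne i j with rfl | hij
  · rfl
  simp only [if_neg hij, if_neg hij.symm, add_zero, add_right_comm m]
  ring

theorem MvPolynomial.IsWeightedHomogeneous.rename {R σ τ M : Type*} [CommSemiring R]
    [AddCommMonoid M] {w : τ → M} {f : σ → τ} {φ : MvPolynomial σ R} {m : M}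
    (h : φ.IsWeightedHomogeneous (w ∘ f) m) : (rename f φ).IsWeightedHomogeneous w m := by
  rw [← φ.support_sum_monomial_coeff, map_sum]
  refine IsWeightedHomogeneous.sum _ _ _ fun d hd => ?_
  rw [rename_monomial]
  refine isWeightedHomogeneous_monomial _ _ _ ?_
  rw [← h (mem_support_iff.mp hd), Finsupp.weight_apply, Finsupp.weight_apply,
    Finsupp.sum_mapDomain_index (by simp) (by simp [add_smul])]
  rfl

theorem Nat.choose_mul_choose_succ_le {A B t : ℕ} (h : A ≤ B + t + 1) :
    A.choose (t + 1) * (B + 1).choose (t + 1) ≤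
      (A + 1).choose (t + 1) * B.choose (t + 1) + A.choose t * B.choose t := by
  have key : A.choose (t + 1) * B.choose t ≤ A.choose t * (B + 1).choose (t + 1) := by
    refine Nat.le_of_mul_le_mul_right ?_ t.succ_pos
    calc A.choose (t + 1) * B.choose t * (t + 1)
        = A.choose t * (A - t) * B.choose t := by rw [mul_right_comm, Nat.choose_succ_right_eq]
      _ ≤ A.choose t * (B + 1) * B.choose t := by gcongr; omega
      _ = A.choose t * (B + 1).choose (t + 1) * (t + 1) := by
        rw [mul_right_comm, mul_assoc, mul_assoc, ← Nat.add_one_mul_choose_eq]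
        ring
  rw [Nat.choose_succ_succ' B] at key ⊢
  rw [Nat.choose_succ_succ' A]
  nlinarith [key]

theorem Nat.choose_mul_choose_add_le {A B t k : ℕ} (h : A + k ≤ B + t + 2) :
    A.choose (t + 1) * (B + k).choose (t + 1) ≤
      (A + k).choose (t + 1) * B.choose (t + 1) + k * ((A + k).choose t * (B + k).choose t) := by
  induction k generalizing A with
  | zero => simp
  | succ k ih =>
    have hstep := Nat.choose_mul_choose_succ_le (A := A) (B := B + k) (t := t) (by omega)
    have hih := ih (A := A + 1) (by omega)
    have h1 : (B + k).choose t ≤ (B + (k + 1)).choose t := Nat.choose_le_choose t (by omega)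
    have h2 : A.choose t ≤ (A + (k + 1)).choose t := Nat.choose_le_choose t (by omega)
    rw [show A + 1 + k = A + (k + 1) by omega] at hih
    calc A.choose (t + 1) * (B + (k + 1)).choose (t + 1)
        ≤ (A + 1).choose (t + 1) * (B + k).choose (t + 1) + A.choose t * (B + k).choose t := hstep
      _ ≤ (A + (k + 1)).choose (t + 1) * B.choose (t + 1) +
            k * ((A + (k + 1)).choose t * (B + k).choose t) + A.choose t * (B + k).choose t := by
        gcongr
      _ ≤ _ := by
        nlinarith [Nat.mul_le_mul h2 h1,
          Nat.mul_le_mul_left k (Nat.mul_le_mul_left ((A + (k + 1)).choose t) h1)]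

namespace KernelBound

variable {n a b : ℕ} {p : 𝒫 n}

noncomputable def Eop (n : ℕ) : Module.End ℂ (𝒫 n) :=
  ∑ i : Fin (n + 1),
    (LinearMap.mulLeft ℂ (X (Sum.inr i))).comp (pderiv (Sum.inl i)).toLinearMap

lemma Dop_apply (p : 𝒫 n) : Dop n p = ∑ i, X (Sum.inl i) * pderiv (Sum.inr i) p := by
  simp [Dop]

lemma Eop_apply (p : 𝒫 n) : Eop n p = ∑ i, X (Sum.inr i) * pderiv (Sum.inl i) p := by
  simp [Eop]

lemma mem_Vab : p ∈ Vab n a b ↔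
    p.IsWeightedHomogeneous (Sum.elim (fun _ => (1, 0)) (fun _ => (0, 1))) (a, b) := Iff.rfl

lemma sum_X_inl_mul_pderiv (hp : p ∈ Vab n a b) :
    ∑ i, X (Sum.inl i) * pderiv (Sum.inl i) p = a • p := by
  simpa [Fintype.sum_sum_type] using
    (hp.comp_addMonoidHom (AddMonoidHom.fst ℕ ℕ)).sum_weight_X_mul_pderiv

lemma sum_X_inr_mul_pderiv (hp : p ∈ Vab n a b) :
    ∑ i, X (Sum.inr i) * pderiv (Sum.inr i) p = b • p := by
  simpa [Fintype.sum_sum_type] using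
    (hp.comp_addMonoidHom (AddMonoidHom.snd ℕ ℕ)).sum_weight_X_mul_pderiv

lemma Dop_mem_Vab (hp : p ∈ Vab n a (b + 1)) : Dop n p ∈ Vab n (a + 1) b := by
  rw [Dop_apply]
  refine Submodule.sum_mem _ fun i _ => mem_Vab.2 ?_
  simpa [add_comm] using
    (isWeightedHomogeneous_X ℂ _ (Sum.inl i)).mul (hp.pderiv (n' := (a, b)) rfl)

lemma Eop_mem_Vab (hp : p ∈ Vab n (a + 1) b) : Eop n p ∈ Vab n a (b + 1) := by
  rw [Eop_apply]
  refine Submodule.sum_mem _ fun i _ => mem_Vab.2 ?_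
  simpa [add_comm] using
    (isWeightedHomogeneous_X ℂ _ (Sum.inr i)).mul (hp.pderiv (n' := (a, b)) rfl)

lemma Eop_eq_zero_of_mem_Vab_zero (hp : p ∈ Vab n 0 b) : Eop n p = 0 := by
  have hx := hp.comp_addMonoidHom (AddMonoidHom.fst ℕ ℕ)
  rw [Eop_apply]
  refine Finset.sum_eq_zero fun i _ => ?_
  suffices pderiv (Sum.inl i) p = 0 by rw [this, mul_zero]
  ext d
  rw [coeff_pderiv, hx.coeff_eq_zero, zero_mul, coeff_zero]
  rw [map_add, Finsupp.weight_single]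
  simp

lemma Dop_Eop_sub_Eop_Dop (p : 𝒫 n) :
    Dop n (Eop n p) - Eop n (Dop n p) =
      ∑ i, X (Sum.inl i) * pderiv (Sum.inl i) p - ∑ i, X (Sum.inr i) * pderiv (Sum.inr i) p := by
  simp only [Dop_apply, Eop_apply, map_sum, pderiv_mul, pderiv_X, Pi.single_apply, mul_add,
    Finset.sum_add_distrib, Sum.inr.injEq, Sum.inl.injEq, ite_mul, one_mul, zero_mul, mul_ite,
    mul_zero, Finset.sum_ite_eq, Finset.mem_univ, if_true]
  have hmix : ∑ j, ∑ i, X (Sum.inl i) * (X (Sum.inr j) * pderiv (Sum.inr i) (pderiv (Sum.inl j) p))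
      = ∑ j, ∑ i, X (Sum.inr i) * (X (Sum.inl j) * pderiv (Sum.inl i) (pderiv (Sum.inr j) p)) := by
    rw [Finset.sum_comm]
    refine Finset.sum_congr rfl fun i _ => Finset.sum_congr rfl fun j _ => ?_
    rw [pderiv_pderiv_comm]
    ring
  rw [hmix]
  abel

lemma Eop_Dop_of_mem_Vab (hp : p ∈ Vab n a b) :
    Eop n (Dop n p) = Dop n (Eop n p) + ((b : ℤ) - a) • p := by
  rw [eq_add_of_sub_eq' (Dop_Eop_sub_Eop_Dop p), sum_X_inl_mul_pderiv hp,
    sum_X_inr_mul_pderiv hp, sub_smul, natCast_zsmul, natCast_zsmul]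
  abel

noncomputable def shiftedDE (n : ℕ) (c : ℤ) : Module.End ℂ (𝒫 n) := Dop n * Eop n + c • 1

lemma shiftedDE_apply (c : ℤ) (p : 𝒫 n) : shiftedDE n c p = Dop n (Eop n p) + c • p := rfl

lemma shiftedDE_mem_Vab (c : ℤ) (hp : p ∈ Vab n a b) : shiftedDE n c p ∈ Vab n a b := by
  refine Submodule.add_mem _ ?_ (zsmul_mem hp c)
  cases a with
  | zero => simp [Eop_eq_zero_of_mem_Vab_zero hp]
  | succ a => exact Dop_mem_Vab (Eop_mem_Vab hp)

lemma shiftedDE_Dop (c : ℤ) (hp : p ∈ Vab n a b) :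
    shiftedDE n c (Dop n p) = Dop n (shiftedDE n (c + (b - a)) p) := by
  simp only [shiftedDE_apply, Eop_Dop_of_mem_Vab hp, map_add, map_zsmul, add_smul]
  abel

lemma list_prod_shiftedDE_mem_Vab (l : List ℤ) (hp : p ∈ Vab n a b) :
    (l.map (shiftedDE n)).prod p ∈ Vab n a b := by
  induction l with
  | nil => exact hp
  | cons c l ih => exact shiftedDE_mem_Vab c ih

lemma list_prod_shiftedDE_Dop (l : List ℤ) (hp : p ∈ Vab n a b) :
    (l.map (shiftedDE n)).prod (Dop n p) =
      Dop n (((l.map (· + ((b : ℤ) - a))).map (shiftedDE n)).prod p) := by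
  induction l with
  | nil => rfl
  | cons c l ih =>
    simp only [List.map_cons, List.prod_cons, Module.End.mul_apply, ih]
    exact shiftedDE_Dop c (list_prod_shiftedDE_mem_Vab _ hp)

lemma Eop_pow_Dop_pow (k : ℕ) (hk : k ≤ b) (hp : p ∈ Vab n a b) :
    (Eop n ^ k) ((Dop n ^ k) p) =
      (((List.range k).map fun i : ℕ => (i + 1) * ((b : ℤ) - a - i)).map (shiftedDE n)).prod p := by
  induction k generalizing a b p with
  | zero => rfl
  | succ k ih =>
    obtain ⟨b, rfl⟩ : ∃ b', b = b' + 1 := ⟨b - 1, by omega⟩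
    -- `(i + 2) (μ - 1 - i) = (i + 1) (μ - 2 - i) + μ` with `μ = b + 1 - a`.
    have hcoeff : ((List.range (k + 1)).map fun i : ℕ => (i + 1) * (((b + 1 : ℕ) : ℤ) - a - i)) =
        (((b + 1 : ℕ) : ℤ) - a) :: ((List.range k).map fun i : ℕ =>
          (i + 1) * ((b : ℤ) - (a + 1 : ℕ) - i)).map (· + (((b + 1 : ℕ) : ℤ) - a)) := by
      rw [List.range_succ_eq_map, List.map_cons, List.map_map, List.map_map]
      congr 1
      · push_cast; ring
      · refine List.map_congr_left fun i _ => ?_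
        simp only [Function.comp_apply]
        push_cast
        ring
    rw [pow_succ', pow_succ, Module.End.mul_apply, Module.End.mul_apply,
      ih (by omega) (Dop_mem_Vab hp), list_prod_shiftedDE_Dop _ hp,
      Eop_Dop_of_mem_Vab (list_prod_shiftedDE_mem_Vab _ hp), ← shiftedDE_apply, hcoeff,
      List.map_cons, List.prod_cons, Module.End.mul_apply]

lemma shiftedDE_eq_zero (hab : a ≤ b) {s : ℤ} (hs : 1 ≤ s) (hp : p ∈ Vab n a b)
    (h : shiftedDE n s p = 0) : p = 0 := by
  induction a generalizing b s p with
  | zero =>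
    rw [shiftedDE_apply, Eop_eq_zero_of_mem_Vab_zero hp, map_zero, zero_add] at h
    exact (smul_eq_zero.mp h).resolve_left (by omega)
  | succ a ih =>
    have hEp := Eop_mem_Vab hp
    have hDE : Dop n (Eop n p) = -(s • p) := eq_neg_of_add_eq_zero_left h
    -- `E p` lies one step lower in `a` and is killed by a shift of `DE` that is still `≥ 1`.
    have hq : shiftedDE n (s + (b + 1 - a)) (Eop n p) = 0 := by
      have := Eop_Dop_of_mem_Vab hEp
      rw [shiftedDE_apply, ← sub_eq_of_eq_add this, hDE]
      simp only [map_neg, map_zsmul]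
      push_cast
      module
    have hEp0 := ih (by omega) (by omega) hEp hq
    rw [shiftedDE_apply, hEp0, map_zero, zero_add] at h
    exact (smul_eq_zero.mp h).resolve_left (by omega)

lemma list_prod_shiftedDE_eq_zero (hab : a ≤ b) {l : List ℤ} (hl : ∀ c ∈ l, 1 ≤ c)
    (hp : p ∈ Vab n a b) (h : (l.map (shiftedDE n)).prod p = 0) : p = 0 := by
  induction l with
  | nil => exact h
  | cons c l ih =>
    rw [List.forall_mem_cons] at hl
    exact ih hl.2 (shiftedDE_eq_zero hab hl.1 (list_prod_shiftedDE_mem_Vab l hp) h)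

lemma Eop_pow_Dop_pow_eq_zero {k : ℕ} (h : a + k ≤ b) (hp : p ∈ Vab n a b)
    (h0 : (Eop n ^ k) ((Dop n ^ k) p) = 0) : p = 0 := by
  rw [Eop_pow_Dop_pow k (by omega) hp] at h0
  refine list_prod_shiftedDE_eq_zero (by omega) ?_ hp h0
  simp only [List.mem_map, List.mem_range]
  rintro c ⟨i, hi, rfl⟩
  have : 1 ≤ (b : ℤ) - a - i := by omega
  nlinarith

noncomputable def swapVars (n : ℕ) : 𝒫 n ≃ₐ[ℂ] 𝒫 n := renameEquiv ℂ (Equiv.sumComm _ _)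

lemma swapVars_apply (p : 𝒫 n) : swapVars n p = rename Sum.swap p := rfl

lemma swapVars_mem_Vab (hp : p ∈ Vab n a b) : swapVars n p ∈ Vab n b a := by
  refine IsWeightedHomogeneous.rename ?_
  convert hp.comp_addMonoidHom (AddEquiv.prodComm : ℕ × ℕ ≃+ ℕ × ℕ).toAddMonoidHom using 1
  · funext x
    cases x <;> rfl
  · rfl

lemma swapVars_Dop (p : 𝒫 n) : swapVars n (Dop n p) = Eop n (swapVars n p) := by
  simp [swapVars_apply, Dop_apply, Eop_apply, ← pderiv_rename Sum.swap_leftInverse.injective]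

lemma swapVars_Eop (p : 𝒫 n) : swapVars n (Eop n p) = Dop n (swapVars n p) := by
  simp [swapVars_apply, Dop_apply, Eop_apply, ← pderiv_rename Sum.swap_leftInverse.injective]

lemma swapVars_Dop_pow (k : ℕ) (p : 𝒫 n) :
    swapVars n ((Dop n ^ k) p) = (Eop n ^ k) (swapVars n p) :=
  (LinearMap.congr_fun (Module.End.commute_pow_left_of_commute
    (f := (swapVars n).toLinearMap) (LinearMap.ext fun p => (swapVars_Dop p).symm) k) p).symm

lemma swapVars_Eop_pow (k : ℕ) (p : 𝒫 n) :
    swapVars n ((Eop n ^ k) p) = (Dop n ^ k) (swapVars n p) :=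
  (LinearMap.congr_fun (Module.End.commute_pow_left_of_commute
    (f := (swapVars n).toLinearMap) (LinearMap.ext fun p => (swapVars_Eop p).symm) k) p).symm

lemma Dop_pow_Eop_pow_eq_zero {k : ℕ} (h : b + k ≤ a) (hp : p ∈ Vab n a b)
    (h0 : (Dop n ^ k) ((Eop n ^ k) p) = 0) : p = 0 := by
  refine (swapVars n).injective ((Eop_pow_Dop_pow_eq_zero h (swapVars_mem_Vab hp) ?_).trans
    (map_zero _).symm)
  rw [← swapVars_Eop_pow, ← swapVars_Dop_pow, h0, map_zero]

lemma Dop_pow_mem_Vab (k : ℕ) (hp : p ∈ Vab n a (b + k)) : (Dop n ^ k) p ∈ Vab n (a + k) b := by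
  induction k generalizing a p with
  | zero => exact hp
  | succ k ih =>
    rw [pow_succ, Module.End.mul_apply, ← add_assoc, add_right_comm]
    exact ih (Dop_mem_Vab hp)

lemma Eop_pow_mem_Vab (k : ℕ) (hp : p ∈ Vab n (a + k) b) : (Eop n ^ k) p ∈ Vab n a (b + k) := by
  induction k generalizing b p with
  | zero => exact hp
  | succ k ih =>
    rw [pow_succ, Module.End.mul_apply, ← add_assoc, add_right_comm]
    exact ih (Eop_mem_Vab hp)

def bidegreeExponents (n a b : ℕ) : Set ((Fin (n + 1) ⊕ Fin (n + 1)) →₀ ℕ) :=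
  {d | Finsupp.weight (Sum.elim (fun _ => (1, 0)) (fun _ => (0, 1))) d = (a, b)}

lemma weight_bidegree (d : (Fin (n + 1) ⊕ Fin (n + 1)) →₀ ℕ) :
    Finsupp.weight (Sum.elim (fun _ => (1, 0)) (fun _ => (0, 1))) d =
      ((Finsupp.sumFinsuppEquivProdFinsupp d).1.sum fun _ => id,
        (Finsupp.sumFinsuppEquivProdFinsupp d).2.sum fun _ => id) := by
  simp [Finsupp.weight_eq_sum, Finsupp.sum_fintype, Fintype.sum_sum_type, Prod.ext_iff,
    Prod.fst_sum, Prod.snd_sum]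

noncomputable def bidegreeExponentsEquiv (n a b : ℕ) :
    bidegreeExponents n a b ≃ Sym (Fin (n + 1)) a × Sym (Fin (n + 1)) b :=
  (Finsupp.sumFinsuppEquivProdFinsupp.subtypeEquiv fun d => by
      simp only [bidegreeExponents, Set.mem_ofPred_eq, weight_bidegree, Prod.ext_iff]).trans <|
    Equiv.subtypeProdEquivProd.trans <|
      (Sym.equivNatSum _ a).symm.prodCongr (Sym.equivNatSum _ b).symm

noncomputable instance (n a b : ℕ) : Fintype (bidegreeExponents n a b) :=
  Fintype.ofEquiv _ (bidegreeExponentsEquiv n a b).symm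

noncomputable def VabEquivFinsupp (n a b : ℕ) : Vab n a b ≃ₗ[ℂ] (bidegreeExponents n a b →₀ ℂ) :=
  (LinearEquiv.ofEq _ _ (weightedHomogeneousSubmodule_eq_finsupp_supported ℂ _ (a, b))).trans
    (AddMonoidAlgebra.supportedEquivFinsupp _)

instance (n a b : ℕ) : FiniteDimensional ℂ (Vab n a b) :=
  Module.Finite.equiv (VabEquivFinsupp n a b).symm

lemma finrank_Vab (n a b : ℕ) :
    Module.finrank ℂ (Vab n a b) = (n + a).choose n * (n + b).choose n := by
  rw [(VabEquivFinsupp n a b).finrank_eq, Module.finrank_finsupp_self,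
    Fintype.card_congr (bidegreeExponentsEquiv n a b), Fintype.card_prod, Sym.card_sym_eq_choose,
    Sym.card_sym_eq_choose, Fintype.card_fin, Nat.choose_symm_add, Nat.choose_symm_add]
  congr 2 <;> omega

lemma Dop_pow_surjOn {k : ℕ} (h : b + k ≤ a) :
    Set.SurjOn (Dop n ^ k) (Vab n (a - k) (b + k)) (Vab n a b) := by
  intro q hq
  have ha : a - k + k = a := Nat.sub_add_cancel (by omega)
  have hmaps : ∀ r ∈ Vab n a b, (Dop n ^ k * Eop n ^ k) r ∈ Vab n a b := fun r hr => by
    rw [← ha] at hr ⊢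
    exact Dop_pow_mem_Vab k (Eop_pow_mem_Vab k hr)
  have hinj : Function.Injective ((Dop n ^ k * Eop n ^ k).restrict hmaps) := by
    rw [← LinearMap.ker_eq_bot, LinearMap.ker_eq_bot']
    exact fun r hr => Subtype.ext (Dop_pow_Eop_pow_eq_zero h r.2 (congrArg Subtype.val hr))
  obtain ⟨r, hr⟩ := LinearMap.injective_iff_surjective.mp hinj ⟨q, hq⟩
  exact ⟨(Eop n ^ k) r, Eop_pow_mem_Vab k (ha.symm ▸ r.2), congrArg Subtype.val hr⟩

lemma ker_eq_bot_of_add_le {N : Submodule ℂ (𝒫 n)} {k : ℕ} (g : Vab n a b →ₗ[ℂ] N)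
    (hg : ∀ v, (g v : 𝒫 n) = (Dop n ^ k) v) (h : a + k ≤ b) : LinearMap.ker g = ⊥ := by
  refine (LinearMap.ker_eq_bot').mpr fun v hv => Subtype.ext ?_
  refine Eop_pow_Dop_pow_eq_zero h v.2 ?_
  rw [← hg, hv, ZeroMemClass.coe_zero, map_zero]

lemma finrank_ker_add_finrank {a' b' k : ℕ} (g : Vab n a' b' →ₗ[ℂ] Vab n a b)
    (hg : ∀ v, (g v : 𝒫 n) = (Dop n ^ k) v) (ha : a' + k = a) (hb : b' = b + k)
    (h : b + k ≤ a) :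
    Module.finrank ℂ (LinearMap.ker g) + Module.finrank ℂ (Vab n a b) =
      Module.finrank ℂ (Vab n a' b') := by
  have hsurj : Function.Surjective g := fun w => by
    obtain ⟨p, hp, hDp⟩ := Dop_pow_surjOn h w.2
    rw [show a - k = a' by omega, ← hb] at hp
    exact ⟨⟨p, hp⟩, Subtype.ext ((hg _).trans hDp)⟩
  rw [← LinearMap.finrank_range_add_finrank_ker g, LinearMap.range_eq_top.mpr hsurj, finrank_top,
    add_comm]

lemma finrank_ker_le {a' b' k c : ℕ} (hn : 1 ≤ n) (g : Vab n a' b' →ₗ[ℂ] Vab n a b)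
    (hg : ∀ v, (g v : 𝒫 n) = (Dop n ^ k) v) (ha : a' + k = a) (hb : b' = b + k)
    (h : b + k ≤ a) (hbal : a ≤ b + n + 1) (hca : n + a ≤ c) (hcb : n + b' ≤ c) :
    Module.finrank ℂ (LinearMap.ker g) ≤ k * c ^ (2 * n - 2) := by
  have hsum := finrank_ker_add_finrank g hg ha hb h
  rw [finrank_Vab, finrank_Vab] at hsum
  have hchoose {N : ℕ} (hN : N ≤ c) : N.choose (n - 1) ≤ c ^ (n - 1) :=
    (Nat.choose_le_pow _ _).trans (Nat.pow_le_pow_left hN _)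
  calc Module.finrank ℂ (LinearMap.ker g)
      ≤ k * ((n + a).choose (n - 1) * (n + b').choose (n - 1)) := by
        obtain ⟨t, rfl⟩ : ∃ t, n = t + 1 := ⟨n - 1, by omega⟩
        subst ha hb
        have := Nat.choose_mul_choose_add_le (A := t + 1 + a') (B := t + 1 + b) (t := t) (k := k)
          (by omega)
        simp only [add_tsub_cancel_right, add_assoc] at this hsum ⊢
        omega
    _ ≤ k * (c ^ (n - 1) * c ^ (n - 1)) := by gcongr <;> exact hchoose ‹_›
    _ = k * c ^ (2 * n - 2) := by rw [← pow_add, show n - 1 + (n - 1) = 2 * n - 2 by omega]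

end KernelBound

open KernelBound in
/-- For `a2 ≥ a1 ≥ 1`, the kernel of
`D^k : V_{m·a1−k, m·a2+k−(n+1)} → V_{m·a1, m·a2−(n+1)}` has dimension `O(m^{2n−2})`. -/
theorem kernel_bound_of_a2_ge_a1 (n k a1 a2 : ℕ)
    (hn : 1 ≤ n) (hk : 1 ≤ k) (ha1 : 1 ≤ a1) (h12 : a1 ≤ a2) :
    ∃ C : ℝ, 0 < C ∧ ∃ M : ℕ, ∀ m : ℕ, M ≤ m → 0 < m →
      ∀ g : (Vab n (m * a1 - k) (m * a2 + k - (n + 1))) →ₗ[ℂ]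
            (Vab n (m * a1) (m * a2 - (n + 1))),
        (∀ v, (g v : MvPolynomial (Fin (n + 1) ⊕ Fin (n + 1)) ℂ)
            = ((Dop n) ^ k) (v : MvPolynomial (Fin (n + 1) ⊕ Fin (n + 1)) ℂ)) →
        (Module.finrank ℂ (LinearMap.ker g) : ℝ)
          ≤ C * (m : ℝ) ^ (2 * n - 2) := by
  refine ⟨k * (a2 + n) ^ (2 * n - 2), mul_pos (by exact_mod_cast hk) (by positivity), n + k + 1,
    fun m hM hm g hg => ?_⟩
  have hma1 : m ≤ m * a1 := Nat.le_mul_of_pos_right m ha1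
  by_cases hinj : m * a1 + (n + 1) ≤ m * a2 + k
  · rw [ker_eq_bot_of_add_le g hg (by omega), finrank_bot, Nat.cast_zero]
    positivity
  have ha : a2 = a1 := by
    by_contra hne
    have : m * (a1 + 1) ≤ m * a2 := Nat.mul_le_mul_left m (by omega)
    rw [Nat.mul_succ] at this
    omega
  subst ha
  have hnm : m ≤ n * m := Nat.le_mul_of_pos_left m hn
  have hcm : (a2 + n) * m = m * a2 + n * m := by ring
  have hker := finrank_ker_le hn g hg (c := (a2 + n) * m) (by omega) (by omega) (by omega)
    (by omega) (by omega) (by omega)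
  rw [mul_pow, ← mul_assoc] at hker
  exact_mod_cast hker
end

section
/- Let n ≥ 1, k ≥ 1 and let a1 > a2 ≥ 1 be integers. Then for all sufficiently large positive integers m, the kernel of the linear map D^k : V_{m·a1−k, m·a2+k−(n+1)} → V_{m·a1, m·a2−(n+1)} has ℂ-dimension exactly C(m·a1−k+n, n)·C(m·a2+k−1, n) − C(m·a1+n, n)·C(m·a2−1, n), where C(·,·) denotes the binomial coefficient. -/
open MvPolynomial

/-!
`D` and `F = ∑ yᵢ ∂/∂xᵢ` generate an `sl₂`-action: their commutator is the difference of the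
two Euler operators, so `DF - FD = a - b` on `V_{a,b}`. The usual `sl₂` argument then shows
that `DF` is injective on `V_{A+1,B}` for `B ≤ A`; by finite dimensionality it is bijective,
so `D : V_{A,B+1} → V_{A+1,B}` is onto. Composing, `D^k` is onto as long as the `y`-degree never
exceeds the `x`-degree along the way, which `a1 > a2` guarantees for `m` large. The kernel
dimension is then the difference of the dimensions `dim V_{a,b} = C(a+n,n)·C(b+n,n)`.
-/

theorem Finsupp.weight_comp {σ M N : Type*} [AddCommMonoid M] [AddCommMonoid N] (w : σ → M)
    (f : M →+ N) (d : σ →₀ ℕ) : weight (f ∘ w) d = f (weight w d) := by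
  simp [weight_apply, map_finsuppSum]

theorem Finsupp.weight_sumElim {ι : Type*} [Fintype ι] (d : ι ⊕ ι →₀ ℕ) :
    weight (Sum.elim (fun _ => ((1 : ℕ), (0 : ℕ))) (fun _ => ((0 : ℕ), (1 : ℕ)))) d =
      ((sumFinsuppEquivProdFinsupp d).1.degree, (sumFinsuppEquivProdFinsupp d).2.degree) := by
  simp [weight_eq_sum, degree_eq_sum, Fintype.sum_sum_type, Prod.ext_iff, Prod.fst_sum,
    Prod.snd_sum]

noncomputable def weightEquivSymProdSym (ι : Type*) [Fintype ι] [DecidableEq ι] (a b : ℕ) :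
    {d : ι ⊕ ι →₀ ℕ // Finsupp.weight
      (Sum.elim (fun _ => ((1 : ℕ), (0 : ℕ))) (fun _ => ((0 : ℕ), (1 : ℕ)))) d = (a, b)} ≃
      Sym ι a × Sym ι b :=
  (Finsupp.sumFinsuppEquivProdFinsupp.subtypeEquiv
      (q := fun e => e.1.degree = a ∧ e.2.degree = b)
      fun d => by rw [Finsupp.weight_sumElim, Prod.mk.injEq]).trans <|
    Equiv.subtypeProdEquivProd.trans <|
      Equiv.prodCongr (Sym.equivNatSum ι a).symm (Sym.equivNatSum ι b).symm

theorem finrank_Vab (n a b : ℕ) :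
    Module.finrank ℂ (Vab n a b) = (a + n).choose n * (b + n).choose n := by
  rw [Vab, weightedHomogeneousSubmodule_eq_finsupp_supported]
  refine (Module.finrank_eq_nat_card_basis (basisRestrictSupport ℂ _)).trans
    ((Nat.card_congr (weightEquivSymProdSym _ a b)).trans ?_)
  rw [Nat.card_prod, Sym.natCard_sym_eq_choose, Sym.natCard_sym_eq_choose,
    Nat.card_eq_fintype_card, Fintype.card_fin, show n + 1 + a - 1 = a + n by omega,
    show n + 1 + b - 1 = b + n by omega, Nat.choose_symm_add, Nat.choose_symm_add]

instance (n a b : ℕ) : FiniteDimensional ℂ (Vab n a b) :=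
  Module.finite_of_finrank_pos <| by
    rw [finrank_Vab]
    exact Nat.mul_pos (Nat.choose_pos (by omega)) (Nat.choose_pos (by omega))

namespace MvPolynomial

theorem IsWeightedHomogeneous.comp {R σ M N : Type*} [CommSemiring R] [AddCommMonoid M]
    [AddCommMonoid N] {w : σ → M} {p : MvPolynomial σ R} {m : M}
    (hp : p.IsWeightedHomogeneous w m) (f : M →+ N) :
    p.IsWeightedHomogeneous (f ∘ w) (f m) := fun d hd => by
  rw [Finsupp.weight_comp, hp hd]

variable {R σ ι : Type*} [CommRing R] [Fintype ι]

variable (R) in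
noncomputable def sumXMulPderiv (u v : ι → σ) :
    Derivation R (MvPolynomial σ R) (MvPolynomial σ R) :=
  ∑ i, (X (u i) : MvPolynomial σ R) • pderiv (v i)

theorem sumXMulPderiv_apply (u v : ι → σ) (p : MvPolynomial σ R) :
    sumXMulPderiv R u v p = ∑ i, X (u i) * pderiv (v i) p := by
  rw [sumXMulPderiv, ← Derivation.coeFnAddMonoidHom_apply, map_sum, Finset.sum_apply]
  simp only [Derivation.coeFnAddMonoidHom_apply, Derivation.smul_apply, smul_eq_mul]

theorem sumXMulPderiv_X_self {v : ι → σ} (hv : v.Injective) (u : ι → σ) (i : ι) :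
    sumXMulPderiv R u v (X (v i)) = X (u i) := by
  classical
  rw [sumXMulPderiv_apply, Finset.sum_eq_single i]
  · simp
  · intro j _ hji
    simp [pderiv_X, hv.ne hji]
  · simp

theorem sumXMulPderiv_X_of_notMem_range {v : ι → σ} {s : σ} (hs : s ∉ Set.range v)
    (u : ι → σ) : sumXMulPderiv R u v (X s) = 0 := by
  classical
  rw [sumXMulPderiv_apply]
  refine Finset.sum_eq_zero fun i _ => ?_
  simp_all [pderiv_X]

theorem lie_sumXMulPderiv_inl_inr :
    ⁅sumXMulPderiv R (Sum.inl : ι → ι ⊕ ι) Sum.inr,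
        sumXMulPderiv R (Sum.inr : ι → ι ⊕ ι) Sum.inl⁆ =
      sumXMulPderiv R (Sum.inl : ι → ι ⊕ ι) Sum.inl -
        sumXMulPderiv R (Sum.inr : ι → ι ⊕ ι) Sum.inr := by
  refine derivation_ext fun s => ?_
  rcases s with i | i
  · simp [Derivation.commutator_apply, sumXMulPderiv_X_self Sum.inl_injective _ i,
      sumXMulPderiv_X_of_notMem_range, sumXMulPderiv_X_self Sum.inr_injective _ i]
  · simp [Derivation.commutator_apply, sumXMulPderiv_X_self Sum.inr_injective _ i,
      sumXMulPderiv_X_of_notMem_range, sumXMulPderiv_X_self Sum.inl_injective _ i]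

theorem IsWeightedHomogeneous.sumXMulPderiv {M : Type*} [AddCancelCommMonoid M] {w : σ → M}
    {p : MvPolynomial σ R} {m du dv : M} (hp : p.IsWeightedHomogeneous w (m + dv))
    {u v : ι → σ} (hu : ∀ i, w (u i) = du) (hv : ∀ i, w (v i) = dv) :
    (sumXMulPderiv R u v p).IsWeightedHomogeneous w (m + du) := by
  rw [sumXMulPderiv_apply]
  refine Submodule.sum_mem (weightedHomogeneousSubmodule R w (m + du)) fun i _ => ?_
  have := (isWeightedHomogeneous_X R w (u i)).mul (hp.pderiv (i := v i) (by rw [hv]))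
  rw [hu, add_comm] at this
  exact this

end MvPolynomial

noncomputable def Fop (n : ℕ) : Derivation ℂ (MvPolynomial (Fin (n + 1) ⊕ Fin (n + 1)) ℂ)
    (MvPolynomial (Fin (n + 1) ⊕ Fin (n + 1)) ℂ) :=
  sumXMulPderiv ℂ Sum.inr Sum.inl

section

variable {n a b : ℕ} {p : MvPolynomial (Fin (n + 1) ⊕ Fin (n + 1)) ℂ}

theorem coe_Dop : ⇑(Dop n) = sumXMulPderiv ℂ Sum.inl Sum.inr := by
  ext p : 1
  simp [Dop, sumXMulPderiv_apply]

theorem Dop_mem_Vab (hp : p ∈ Vab n a (b + 1)) : Dop n p ∈ Vab n (a + 1) b := by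
  rw [Vab, mem_weightedHomogeneousSubmodule] at hp ⊢
  rw [coe_Dop]
  exact hp.sumXMulPderiv (m := (a, b)) (du := (1, 0)) (dv := (0, 1)) (fun _ => rfl) (fun _ => rfl)

theorem Fop_mem_Vab (hp : p ∈ Vab n (a + 1) b) : Fop n p ∈ Vab n a (b + 1) := by
  rw [Vab, mem_weightedHomogeneousSubmodule] at hp ⊢
  exact hp.sumXMulPderiv (m := (a, b)) (du := (0, 1)) (dv := (1, 0)) (fun _ => rfl) (fun _ => rfl)

theorem Dop_eq_zero_of_mem_Vab_zero (hp : p ∈ Vab n a 0) : Dop n p = 0 := by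
  rw [coe_Dop, sumXMulPderiv_apply]
  refine Finset.sum_eq_zero fun i _ => ?_
  rw [pderiv_eq_zero_of_notMem_vars, mul_zero]
  intro hi
  obtain ⟨d, hd, hdi⟩ := (mem_vars_iff_mem_support _).1 hi
  have hdeg := congr_arg Prod.snd (hp (mem_support_iff.1 hd))
  rw [Finsupp.weight_sumElim, Finsupp.degree_eq_zero_iff] at hdeg
  have hdi0 := DFunLike.congr_fun hdeg i
  rw [Finsupp.snd_sumFinsuppEquivProdFinsupp] at hdi0
  exact Finsupp.mem_support_iff.1 hdi hdi0

theorem sumXMulPderiv_inl_inl_of_mem_Vab (hp : p ∈ Vab n a b) :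
    sumXMulPderiv ℂ Sum.inl Sum.inl p = (a : ℂ) • p := by
  have := (hp.comp (AddMonoidHom.fst ℕ ℕ)).sum_weight_X_mul_pderiv
  simpa [Fintype.sum_sum_type, sumXMulPderiv_apply, Nat.cast_smul_eq_nsmul] using this

theorem sumXMulPderiv_inr_inr_of_mem_Vab (hp : p ∈ Vab n a b) :
    sumXMulPderiv ℂ Sum.inr Sum.inr p = (b : ℂ) • p := by
  have := (hp.comp (AddMonoidHom.snd ℕ ℕ)).sum_weight_X_mul_pderiv
  simpa [Fintype.sum_sum_type, sumXMulPderiv_apply, Nat.cast_smul_eq_nsmul] using this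

theorem Dop_Fop_sub_Fop_Dop_of_mem_Vab (hp : p ∈ Vab n a b) :
    Dop n (Fop n p) - Fop n (Dop n p) = ((a : ℂ) - b) • p := by
  have := congr($(lie_sumXMulPderiv_inl_inr (R := ℂ) (ι := Fin (n + 1))) p)
  rw [Derivation.commutator_apply, Derivation.sub_apply, sumXMulPderiv_inl_inl_of_mem_Vab hp,
    sumXMulPderiv_inr_inr_of_mem_Vab hp, ← sub_smul] at this
  rwa [coe_Dop]

/-- If `DF p = -c p`, then `FD p = -(c + A - B) p`, so `D p` is again an eigenvector of `DF`
with nonpositive eigenvalue, one `y`-degree lower. By induction `D p = 0`, and then the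
eigenvalue `-(c + A - B) < 0` of `FD` forces `p = 0`. -/
theorem eq_zero_of_Dop_Fop_eq_neg_smul {A B c : ℕ} (hBA : B < A) (hp : p ∈ Vab n A B)
    (h : Dop n (Fop n p) = -(c : ℂ) • p) : p = 0 := by
  induction B using Nat.strong_induction_on generalizing A c p with
  | _ B ih =>
  have hFD : Fop n (Dop n p) = -((c + A - B : ℕ) : ℂ) • p := by
    have := Dop_Fop_sub_Fop_Dop_of_mem_Vab hp
    rw [Nat.cast_sub (by omega)]
    push_cast
    linear_combination (norm := module) h - this
  have hDp : Dop n p = 0 := by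
    rcases B with _ | B
    · exact Dop_eq_zero_of_mem_Vab_zero hp
    · refine ih B B.lt_succ_self (by omega) (Dop_mem_Vab hp) (c := c + A - (B + 1)) ?_
      rw [hFD, LinearMap.map_smul]
  rw [hDp, map_zero, eq_comm, smul_eq_zero] at hFD
  exact hFD.resolve_left (by simp; omega)

theorem Dop_surjOn {A B : ℕ} (hBA : B ≤ A) :
    Set.SurjOn (Dop n) (Vab n A (B + 1)) (Vab n (A + 1) B) := by
  let DF : Module.End ℂ (Vab n (A + 1) B) :=
    ((Dop n).comp (Fop n).toLinearMap).restrict fun _ hp => Dop_mem_Vab (Fop_mem_Vab hp)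
  have hDF : Function.Injective DF := by
    rw [← LinearMap.ker_eq_bot, LinearMap.ker_eq_bot']
    intro q hq
    refine Subtype.ext (eq_zero_of_Dop_Fop_eq_neg_smul (c := 0) (by omega) q.2 ?_)
    simpa [DF] using congr_arg Subtype.val hq
  intro q hq
  obtain ⟨p, hp⟩ := LinearMap.injective_iff_surjective.1 hDF ⟨q, hq⟩
  exact ⟨Fop n p, Fop_mem_Vab p.2, congr_arg Subtype.val hp⟩

theorem Dop_pow_surjOn {A B k : ℕ} (h : B + k ≤ A + 1) :
    Set.SurjOn ⇑(Dop n ^ k) (Vab n A (B + k)) (Vab n (A + k) B) := by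
  induction k generalizing B with
  | zero =>
    rw [pow_zero, Module.End.coe_one]
    exact Set.surjOn_id _
  | succ k ih =>
    have ih' := ih (B := B + 1) (by omega)
    rw [Nat.add_right_comm] at ih'
    rw [pow_succ', Module.End.coe_mul]
    exact (Dop_surjOn (A := A + k) (by omega)).comp ih'

end

theorem kernel_dim_of_a1_gt_a2_general (n k a1 a2 : ℕ)
    (ha2 : 1 ≤ a2) (h12 : a2 < a1) :
    ∃ M : ℕ, ∀ m : ℕ, M ≤ m → 0 < m →
      ∀ g : (Vab n (m * a1 - k) (m * a2 + k - (n + 1))) →ₗ[ℂ]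
            (Vab n (m * a1) (m * a2 - (n + 1))),
        (∀ v, (g v : MvPolynomial (Fin (n + 1) ⊕ Fin (n + 1)) ℂ)
            = ((Dop n) ^ k) (v : MvPolynomial (Fin (n + 1) ⊕ Fin (n + 1)) ℂ)) →
        Module.finrank ℂ (LinearMap.ker g)
          = Nat.choose (m * a1 - k + n) n * Nat.choose (m * a2 + k - 1) n
            - Nat.choose (m * a1 + n) n * Nat.choose (m * a2 - 1) n := by
  -- `m ≥ 2k` gives the degree condition of `Dop_pow_surjOn`, and `m ≥ n + 1` keeps
  -- `m * a2 - (n + 1)` from truncating.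
  refine ⟨2 * k + n + 1, fun m hm _ g hg => ?_⟩
  have hma1 : m * a2 + m ≤ m * a1 := by nlinarith
  have hma2 : m ≤ m * a2 := Nat.le_mul_of_pos_right m ha2
  have hsurjOn := Dop_pow_surjOn (n := n) (A := m * a1 - k) (B := m * a2 - (n + 1)) (k := k)
    (by omega)
  rw [show m * a2 - (n + 1) + k = m * a2 + k - (n + 1) by omega,
    show m * a1 - k + k = m * a1 by omega] at hsurjOn
  have hsurj : Function.Surjective g := fun q => by
    obtain ⟨p, hp, hpq⟩ := hsurjOn q.2
    exact ⟨⟨p, hp⟩, Subtype.ext ((hg _).trans hpq)⟩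
  have hrank := LinearMap.finrank_range_add_finrank_ker g
  rw [LinearMap.range_eq_top.2 hsurj, finrank_top, finrank_Vab, finrank_Vab,
    show m * a2 - (n + 1) + n = m * a2 - 1 by omega,
    show m * a2 + k - (n + 1) + n = m * a2 + k - 1 by omega] at hrank
  omega

/-- For `a1 > a2 ≥ 1` and `m` large, the kernel of
`D^k : V_{m·a1−k, m·a2+k−(n+1)} → V_{m·a1, m·a2−(n+1)}` has dimension exactly
`C(m·a1−k+n, n)·C(m·a2+k−1, n) − C(m·a1+n, n)·C(m·a2−1, n)`. -/
theorem kernel_dim_of_a1_gt_a2 (n k a1 a2 : ℕ)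
    (hn : 1 ≤ n) (hk : 1 ≤ k) (ha2 : 1 ≤ a2) (h12 : a2 < a1) :
    ∃ M : ℕ, ∀ m : ℕ, M ≤ m → 0 < m →
      ∀ g : (Vab n (m * a1 - k) (m * a2 + k - (n + 1))) →ₗ[ℂ]
            (Vab n (m * a1) (m * a2 - (n + 1))),
        (∀ v, (g v : MvPolynomial (Fin (n + 1) ⊕ Fin (n + 1)) ℂ)
            = ((Dop n) ^ k) (v : MvPolynomial (Fin (n + 1) ⊕ Fin (n + 1)) ℂ)) →
        Module.finrank ℂ (LinearMap.ker g)
          = Nat.choose (m * a1 - k + n) n * Nat.choose (m * a2 + k - 1) n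
            - Nat.choose (m * a1 + n) n * Nat.choose (m * a2 - 1) n :=
  kernel_dim_of_a1_gt_a2_general n k a1 a2 ha2 h12
end
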